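/- arXiv:1602.08307 — 3 statements merged into one kernel-verified Lean document; each statement's English description precedes it below -/
import Mathlib

section
/- Let b₁, b₂, b₃ be real numbers and suppose positive reals p₁,...,p₅ satisfy p₁ − p₄ = b₁, p₂ − p₃ = b₂, 2p₃ + 2p₄ − p₅ = b₃, p₁p₄ = p₅², and p₂p₃ = p₅². Then p₅ satisfies a polynomial equation of degree 4 in p₅ with coefficients polynomial in b₁, b₂, b₃: namely, writing p₁ + p₄ = s and p₂ + p₃ = t, one has s² = b₁² + 4p₅², t² = b₂² + 4p₅² and s + t = b₃' for b₃' determined by the linear relations, so that (s² − b₁²) = (t² − b₂²), and s, t are roots of explicit quadratics; in particular ((s+t)² − b₁² − b₂² − 8p₅²)² = 4(b₁² + 4p₅²)(b₂² + 4p₅²). -/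
/-- Elimination identities for the quartic equation satisfied by `p̂₅`: with
`s = p₁ + p₄` and `t = p₂ + p₃` one has `s² = b₁² + 4p₅²`, `t² = b₂² + 4p₅²`,
`s² − b₁² = t² − b₂²`, and `((s+t)² − b₁² − b₂² − 8p₅²)² = 4(b₁² + 4p₅²)(b₂² + 4p₅²)`. -/
theorem stmt_10 (b₁ b₂ b₃ p₁ p₂ p₃ p₄ p₅ : ℝ)
    (hp₁ : 0 < p₁) (hp₂ : 0 < p₂) (hp₃ : 0 < p₃) (hp₄ : 0 < p₄) (hp₅ : 0 < p₅)
    (h1 : p₁ - p₄ = b₁) (h2 : p₂ - p₃ = b₂) (h3 : 2 * p₃ + 2 * p₄ - p₅ = b₃)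
    (hq1 : p₁ * p₄ = p₅ ^ 2) (hq2 : p₂ * p₃ = p₅ ^ 2) :
    (p₁ + p₄) ^ 2 = b₁ ^ 2 + 4 * p₅ ^ 2 ∧
    (p₂ + p₃) ^ 2 = b₂ ^ 2 + 4 * p₅ ^ 2 ∧
    (p₁ + p₄) ^ 2 - b₁ ^ 2 = (p₂ + p₃) ^ 2 - b₂ ^ 2 ∧
    (((p₁ + p₄) + (p₂ + p₃)) ^ 2 - b₁ ^ 2 - b₂ ^ 2 - 8 * p₅ ^ 2) ^ 2 =
      4 * (b₁ ^ 2 + 4 * p₅ ^ 2) * (b₂ ^ 2 + 4 * p₅ ^ 2) := by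
  subst h1 h2
  have e1 : (p₁ + p₄) ^ 2 = (p₁ - p₄) ^ 2 + 4 * p₅ ^ 2 := by nlinarith
  have e2 : (p₂ + p₃) ^ 2 = (p₂ - p₃) ^ 2 + 4 * p₅ ^ 2 := by nlinarith
  refine ⟨e1, e2, by linarith, ?_⟩
  nlinarith [e1, e2, sq_nonneg (p₁ + p₄), sq_nonneg (p₂ + p₃)]
end

section
/- Let b₁, b₂, b₃ ∈ ℝ and suppose positive reals p₁,...,p₅ satisfy p₁ − p₄ = b₁, p₂ − p₃ = b₂, 2p₃ + 2p₄ − p₅ = b₃, p₁+p₂+p₃+p₄+p₅ = 1, p₁p₄ = p₅², and p₂p₃ = p₅². Then p₁,...,p₅ are uniquely determined by (b₁, b₂, b₃); i.e., any two solutions with all coordinates positive coincide. -/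
/-- Uniqueness (Birch) for the quartic toric Del Pezzo model with four A₁
singularities: two positive solutions of the model equations with the same
sufficient statistics coincide. -/
theorem stmt_15 (b₁ b₂ b₃ : ℝ) (p q : Fin 5 → ℝ)
    (hp : ∀ i, 0 < p i) (hq : ∀ i, 0 < q i)
    (hp1 : p 0 - p 3 = b₁) (hp2 : p 1 - p 2 = b₂)
    (hp3 : 2 * p 2 + 2 * p 3 - p 4 = b₃)
    (hpsum : p 0 + p 1 + p 2 + p 3 + p 4 = 1)
    (hpq1 : p 0 * p 3 = p 4 ^ 2) (hpq2 : p 1 * p 2 = p 4 ^ 2)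
    (hq1 : q 0 - q 3 = b₁) (hq2 : q 1 - q 2 = b₂)
    (hq3 : 2 * q 2 + 2 * q 3 - q 4 = b₃)
    (hqsum : q 0 + q 1 + q 2 + q 3 + q 4 = 1)
    (hqq1 : q 0 * q 3 = q 4 ^ 2) (hqq2 : q 1 * q 2 = q 4 ^ 2) :
    p = q := by
  have hs3 : 0 < q 3 + p 3 + b₁ := by have := hp 0; have := hq 3; linarith
  have hs2 : 0 < q 2 + p 2 + b₂ := by have := hp 1; have := hq 2; linarith
  have hs4 : 0 < q 4 + p 4 := by have := hp 4; have := hq 4; linarith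
  have A : (q 3 - p 3) * (q 3 + p 3 + b₁) = (q 4 - p 4) * (q 4 + p 4) := by
    linear_combination hqq1 - q 3 * hq1 - hpq1 + p 3 * hp1
  have B : (q 2 - p 2) * (q 2 + p 2 + b₂) = (q 4 - p 4) * (q 4 + p 4) := by
    linear_combination hqq2 - q 2 * hq2 - hpq2 + p 2 * hp2
  have C : 2 * (q 3 - p 3) + 2 * (q 2 - p 2) + (q 4 - p 4) = 0 := by
    linear_combination hqsum - hq1 - hq2 - hpsum + hp1 + hp2
  have key : q 4 = p 4 := by
    by_contra h
    rcases lt_or_gt_of_ne h with hlt | hgt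
    · have h1 : (q 4 - p 4) * (q 4 + p 4) < 0 :=
        mul_neg_of_neg_of_pos (by linarith) hs4
      have hd3 : q 3 - p 3 < 0 := by nlinarith [A, hs3, h1]
      have hd2 : q 2 - p 2 < 0 := by nlinarith [B, hs2, h1]
      linarith
    · have h1 : 0 < (q 4 - p 4) * (q 4 + p 4) :=
        mul_pos (by linarith) hs4
      have hd3 : 0 < q 3 - p 3 := by nlinarith [A, hs3, h1]
      have hd2 : 0 < q 2 - p 2 := by nlinarith [B, hs2, h1]
      linarith
  have h0 : (q 3 - p 3) * (q 3 + p 3 + b₁) = 0 := by rw [A, key]; ring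
  have h3 : q 3 = p 3 := by
    rcases mul_eq_zero.mp h0 with h | h
    · linarith
    · linarith
  have h0' : (q 2 - p 2) * (q 2 + p 2 + b₂) = 0 := by rw [B, key]; ring
  have h2 : q 2 = p 2 := by
    rcases mul_eq_zero.mp h0' with h | h
    · linarith
    · linarith
  have e0 : p 0 = q 0 := by linarith only [hp1, hq1, h3]
  have e1 : p 1 = q 1 := by linarith only [hp2, hq2, h2]
  have e2 : p 2 = q 2 := h2.symm
  have e3 : p 3 = q 3 := h3.symm
  have e4 : p 4 = q 4 := key.symm
  funext i
  match i with
  | 0 => exact e0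
  | 1 => exact e1
  | 2 => exact e2
  | 3 => exact e3
  | 4 => exact e4
end

section
/- Let p₁, p₂, p₃, p₄ be positive reals with p₁+p₂+p₃+p₄ = 1 and p₄³ = p₁p₂p₃, and let q₁, q₂, q₃, q₄ be positive reals with q₁+q₂+q₃+q₄ = 1 and q₄³ = q₁q₂q₃. If 3pₖ + p₄ = 3qₖ + q₄ for k = 1, 2, 3, then pₖ = qₖ for all k = 1, 2, 3, 4. -/
/-- Uniqueness of the positive solution to the likelihood equations for the cubic
toric Del Pezzo model `S₃`. -/
theorem stmt_16 (p₁ p₂ p₃ p₄ q₁ q₂ q₃ q₄ : ℝ)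
    (hp₁ : 0 < p₁) (hp₂ : 0 < p₂) (hp₃ : 0 < p₃) (hp₄ : 0 < p₄)
    (hpsum : p₁ + p₂ + p₃ + p₄ = 1) (hpcubic : p₄ ^ 3 = p₁ * p₂ * p₃)
    (hq₁ : 0 < q₁) (hq₂ : 0 < q₂) (hq₃ : 0 < q₃) (hq₄ : 0 < q₄)
    (hqsum : q₁ + q₂ + q₃ + q₄ = 1) (hqcubic : q₄ ^ 3 = q₁ * q₂ * q₃)
    (h1 : 3 * p₁ + p₄ = 3 * q₁ + q₄) (h2 : 3 * p₂ + p₄ = 3 * q₂ + q₄)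
    (h3 : 3 * p₃ + p₄ = 3 * q₃ + q₄) :
    p₁ = q₁ ∧ p₂ = q₂ ∧ p₃ = q₃ ∧ p₄ = q₄ := by
  have key : p₄ = q₄ := by
    rcases lt_trichotomy p₄ q₄ with h | h | h
    · have e1 : q₁ < p₁ := by linarith
      have e2 : q₂ < p₂ := by linarith
      have e3 : q₃ < p₃ := by linarith
      have hlt : q₁ * q₂ * q₃ < p₁ * p₂ * p₃ :=
        mul_lt_mul'' (mul_lt_mul'' e1 e2 hq₁.le hq₂.le) e3
          (mul_pos hq₁ hq₂).le hq₃.le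
      have : p₄ ^ 3 < q₄ ^ 3 := pow_lt_pow_left₀ h hp₄.le (by norm_num)
      linarith
    · exact h
    · have e1 : p₁ < q₁ := by linarith
      have e2 : p₂ < q₂ := by linarith
      have e3 : p₃ < q₃ := by linarith
      have hlt : p₁ * p₂ * p₃ < q₁ * q₂ * q₃ :=
        mul_lt_mul'' (mul_lt_mul'' e1 e2 hp₁.le hp₂.le) e3
          (mul_pos hp₁ hp₂).le hp₃.le
      have : q₄ ^ 3 < p₄ ^ 3 := pow_lt_pow_left₀ h hq₄.le (by norm_num)
      linarith
  refine ⟨by linarith, by linarith, by linarith, key⟩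
end
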